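/- Define γ_t = \sum_{d=0}^{t+2} l(d,t) · 2^{t+2-d}, where l(d,t) is the coefficient of y^d in (1+y+y^2)^{t-1}. Then γ_{t+1} > (13/4) · γ_t for all t ≥ 2 (as rational numbers, after scaling to clear denominators: 4γ_{t+1} > 13γ_t). -/
import Mathlib


open Polynomial Finset

private noncomputable def qq : ℤ[X] := 1 + X + X ^ 2

private lemma qq_coeff_nonneg (i : ℕ) : 0 ≤ qq.coeff i := by
  simp only [qq, coeff_add, coeff_one, coeff_X, coeff_X_pow]
  split_ifs <;> norm_num

private lemma qq_natDegree : qq.natDegree = 2 := by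
  unfold qq; compute_degree!

private lemma qq_reverse : qq.reverse = qq := by
  have h : qq = X ^ 0 + X ^ 1 + X ^ 2 := by simp [qq]
  rw [reverse, qq_natDegree, h, reflect_add, reflect_add, reflect_monomial,
    reflect_monomial, reflect_monomial, revAt_le (by norm_num), revAt_le (by norm_num),
    revAt_le (by norm_num)]
  norm_num
  ring

private lemma qq_pow_reverse (n : ℕ) : (qq ^ n).reverse = qq ^ n := by
  induction n with
  | zero => simp [reverse, reflect_one]
  | succ n ih => rw [pow_succ, reverse_mul_of_domain, ih, qq_reverse]

private lemma qq_pow_natDegree (n : ℕ) : (qq ^ n).natDegree = 2 * n := by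
  rw [natDegree_pow, qq_natDegree, mul_comm]

private lemma qq_pow_symm (n d : ℕ) (h : d ≤ 2 * n) :
    (qq ^ n).coeff (2 * n - d) = (qq ^ n).coeff d := by
  conv_rhs => rw [← qq_pow_reverse n, coeff_reverse, qq_pow_natDegree, revAt_le h]

private lemma qq_pow_coeff_nonneg (n d : ℕ) : 0 ≤ (qq ^ n).coeff d := by
  induction n generalizing d with
  | zero => simp only [pow_zero, coeff_one]; split_ifs <;> norm_num
  | succ n ih =>
    rw [pow_succ, coeff_mul]
    exact Finset.sum_nonneg fun x _ => mul_nonneg (ih _) (qq_coeff_nonneg _)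

private lemma qq_pow_coeff_zero (n : ℕ) : (qq ^ n).coeff 0 = 1 := by
  simp [coeff_zero_eq_eval_zero, qq]

private noncomputable def Sg (p : ℤ[X]) (N : ℕ) : ℤ :=
  ∑ d ∈ range (N + 1), p.coeff d * 2 ^ (N - d)

private lemma Sg_succ (p : ℤ[X]) (N : ℕ) :
    Sg p (N + 1) = 2 * Sg p N + p.coeff (N + 1) := by
  unfold Sg
  rw [Finset.sum_range_succ]
  have h : ∀ d ∈ range (N + 1), p.coeff d * 2 ^ (N + 1 - d)
      = 2 * (p.coeff d * 2 ^ (N - d)) := by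
    intro d hd
    rw [Finset.mem_range] at hd
    rw [show N + 1 - d = (N - d) + 1 by omega, pow_succ]
    ring
  rw [Finset.sum_congr rfl h, ← Finset.mul_sum]
  simp

private lemma Sg_mul_X (p : ℤ[X]) (N : ℕ) : Sg (p * X) (N + 1) = Sg p N := by
  unfold Sg
  rw [Finset.sum_range_succ']
  have h : ∀ i ∈ range (N + 1), (p * X).coeff (i + 1) * 2 ^ (N + 1 - (i + 1))
      = p.coeff i * 2 ^ (N - i) := by
    intro i _
    rw [coeff_mul_X, show N + 1 - (i + 1) = N - i by omega]
  rw [Finset.sum_congr rfl h]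
  simp

private lemma Sg_add (p q : ℤ[X]) (N : ℕ) : Sg (p + q) N = Sg p N + Sg q N := by
  unfold Sg
  rw [← Finset.sum_add_distrib]
  exact Finset.sum_congr rfl fun d _ => by rw [coeff_add, add_mul]

/-- With `γ_t = ∑_{d=0}^{t+2} l(d,t)·2^{t+2-d}` where `l(d,t)` is the
coefficient of `y^d` in `(1+y+y^2)^(t-1)`, we have `4γ_{t+1} > 13γ_t` for
`t ≥ 2`. -/
theorem gamma_growth (t : ℕ) (ht : 2 ≤ t) :
    4 * (∑ d ∈ range (t + 1 + 3),
        ((1 + X + X ^ 2 : ℤ[X]) ^ (t + 1 - 1)).coeff d * 2 ^ (t + 1 + 2 - d)) >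
    13 * (∑ d ∈ range (t + 3),
        ((1 + X + X ^ 2 : ℤ[X]) ^ (t - 1)).coeff d * 2 ^ (t + 2 - d)) := by
  show 4 * Sg (qq ^ t) (t + 3) > 13 * Sg (qq ^ (t - 1)) (t + 2)
  set p : ℤ[X] := qq ^ (t - 1) with hp
  have hqt : qq ^ t = p + (p * X + p * X ^ 2) := by
    conv_lhs => rw [show t = (t - 1) + 1 by omega, pow_succ]
    show qq ^ (t - 1) * (1 + X + X ^ 2) = _
    rw [hp]; ring
  rw [hqt, Sg_add, Sg_add]
  have e1 : Sg p (t + 3) = 2 * Sg p (t + 2) + p.coeff (t + 3) := Sg_succ p (t + 2)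
  have e2 : Sg (p * X) (t + 3) = Sg p (t + 2) := Sg_mul_X p (t + 2)
  have e3 : Sg (p * X ^ 2) (t + 3) = Sg p (t + 1) := by
    rw [show (X : ℤ[X]) ^ 2 = X * X by ring, ← mul_assoc]
    rw [show t + 3 = (t + 1) + 1 + 1 by omega, Sg_mul_X, Sg_mul_X]
  have e4 : Sg p (t + 2) = 2 * Sg p (t + 1) + p.coeff (t + 2) := Sg_succ p (t + 1)
  have hc3 : 0 ≤ p.coeff (t + 3) := qq_pow_coeff_nonneg _ _
  have hterm : ∀ i ∈ range (t + 2), 0 ≤ p.coeff i * 2 ^ (t + 1 - i) :=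
    fun i _ => mul_nonneg (qq_pow_coeff_nonneg _ _) (by positivity)
  have hA0 : (2 : ℤ) ^ (t + 1) ≤ Sg p (t + 1) := by
    have := Finset.single_le_sum hterm (Finset.mem_range.2 (show 0 < t + 2 by omega))
    rwa [hp, qq_pow_coeff_zero, one_mul, Nat.sub_zero] at this
  have key : p.coeff (t + 2) < 2 * Sg p (t + 1) := by
    by_cases hc : p.coeff (t + 2) = 0
    · rw [hc]
      have : (0 : ℤ) < 2 ^ (t + 1) := by positivity
      linarith
    · have ht4 : 4 ≤ t := by
        by_contra h
        exact hc (coeff_eq_zero_of_natDegree_lt (by rw [hp, qq_pow_natDegree]; omega))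
      have hsym : p.coeff (t - 4) = p.coeff (t + 2) := by
        have h := qq_pow_symm (t - 1) (t + 2) (by omega)
        rwa [show 2 * (t - 1) - (t + 2) = t - 4 by omega, ← hp] at h
      have hA : 32 * p.coeff (t + 2) ≤ Sg p (t + 1) := by
        have := Finset.single_le_sum hterm
          (Finset.mem_range.2 (show t - 4 < t + 2 by omega))
        rwa [hsym, show t + 1 - (t - 4) = 5 by omega, show (2:ℤ)^5 = 32 by norm_num,
          mul_comm] at this
      have hcpos : 0 < p.coeff (t + 2) :=
        lt_of_le_of_ne (qq_pow_coeff_nonneg _ _) (Ne.symm hc)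
      linarith
  linarith
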